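/- arXiv:1603.09103 — 4 statements merged into one kernel-verified Lean document; each statement's English description precedes it below -/
import Mathlib

section
/- Let t be an SL₂-tiling. For all integers a ≤ d, the value t(a,w)·t(d,w+1) − t(a,w+1)·t(d,w) is independent of the integer w, i.e. for all integers w, w' one has t(a,w)·t(d,w+1) − t(a,w+1)·t(d,w) = t(a,w')·t(d,w'+1) − t(a,w'+1)·t(d,w'). Similarly, for all integers u ≤ x and all integers c, c' one has t(c,u)·t(c+1,x) − t(c,x)·t(c+1,u) = t(c',u)·t(c'+1,x) − t(c',x)·t(c'+1,u). -/
/-!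
Along a column pair `w, w+1, w+2` every row satisfies `t i w + t i (w+2) = m · t i (w+1)` with a
multiplier `m` that does not depend on `i`: the unimodularity of the two adjacent `2×2` minors in
rows `i, i+1` says exactly that this ratio is the same in rows `i` and `i+1`. Expanding, the
difference of the minor `t a w · t d (w+1) - t a (w+1) · t d w` at `w+1` and at `w` is
`t a (w+1) · (t d w + t d (w+2)) - t d (w+1) · (t a w + t a (w+2))`, which vanishes. The row
statement is the column statement for the transposed tiling.
-/

/-- An `SL₂`-tiling: all entries are `≥ 1` and every adjacent `2×2` minor is `1`. -/
def IsSL2Tiling (t : ℤ → ℤ → ℤ) : Prop :=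
  (∀ i j, 1 ≤ t i j) ∧
  (∀ i j, t i j * t (i+1) (j+1) - t i (j+1) * t (i+1) j = 1)

theorem Function.Periodic.eq_of_one {α : Type*} {f : ℤ → α} (h : Function.Periodic f 1)
    (m n : ℤ) : f m = f n := by
  simpa using (h.int_mul_eq m).trans (h.int_mul_eq n).symm

theorem mul_eq_mul_of_forall_mul_add_one_eq {K : Type*} [Field K] {f g : ℤ → K}
    (hg : ∀ i, g i ≠ 0) (h : ∀ i, f i * g (i + 1) = f (i + 1) * g i) (a d : ℤ) :
    f a * g d = f d * g a := by
  have hratio : Function.Periodic (fun i => f i / g i) 1 := fun i =>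
    (div_eq_div_iff (hg (i + 1)) (hg i)).2 (h i).symm
  exact (div_eq_div_iff (hg a) (hg d)).1 (hratio.eq_of_one a d)

namespace IsSL2Tiling

variable {t : ℤ → ℤ → ℤ}

theorem transpose (ht : IsSL2Tiling t) : IsSL2Tiling (fun i j => t j i) :=
  ⟨fun i j => ht.1 j i, fun i j => by linear_combination ht.2 j i⟩

theorem ne_zero (ht : IsSL2Tiling t) (i j : ℤ) : t i j ≠ 0 := by
  have := ht.1 i j
  omega

theorem add_mul_eq_add_mul_add_one (ht : IsSL2Tiling t) (i j : ℤ) :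
    (t i j + t i (j + 2)) * t (i + 1) (j + 1) =
      (t (i + 1) j + t (i + 1) (j + 2)) * t i (j + 1) := by
  have hnext := ht.2 i (j + 1)
  rw [add_assoc j 1 1, one_add_one_eq_two] at hnext
  linear_combination ht.2 i j - hnext

theorem add_mul_eq_add_mul (ht : IsSL2Tiling t) (a d j : ℤ) :
    (t a j + t a (j + 2)) * t d (j + 1) = (t d j + t d (j + 2)) * t a (j + 1) := by
  have hQ := mul_eq_mul_of_forall_mul_add_one_eq (K := ℚ)
    (f := fun i => (t i j + t i (j + 2) : ℚ)) (g := fun i => (t i (j + 1) : ℚ))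
    (fun i => Int.cast_ne_zero.2 (ht.ne_zero i (j + 1)))
    (fun i => by exact_mod_cast ht.add_mul_eq_add_mul_add_one i j) a d
  exact_mod_cast hQ

theorem minor_eq (ht : IsSL2Tiling t) (a d w w' : ℤ) :
    t a w * t d (w + 1) - t a (w + 1) * t d w =
      t a w' * t d (w' + 1) - t a (w' + 1) * t d w' := by
  refine Function.Periodic.eq_of_one
    (f := fun w => t a w * t d (w + 1) - t a (w + 1) * t d w) (fun w => ?_) w w'
  have hm := ht.add_mul_eq_add_mul a d w
  simp only [add_assoc w 1 1, one_add_one_eq_two]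
  linear_combination -hm

end IsSL2Tiling

theorem pq_well_defined (t : ℤ → ℤ → ℤ) (ht : IsSL2Tiling t) :
    (∀ a d : ℤ, a ≤ d → ∀ w w' : ℤ,
      t a w * t d (w+1) - t a (w+1) * t d w =
        t a w' * t d (w'+1) - t a (w'+1) * t d w') ∧
    (∀ u x : ℤ, u ≤ x → ∀ c c' : ℤ,
      t c u * t (c+1) x - t c x * t (c+1) u =
        t c' u * t (c'+1) x - t c' x * t (c'+1) u) :=
  ⟨fun a d _ => ht.minor_eq a d, fun u x _ c c' => by
    linear_combination ht.transpose.minor_eq u x c c'⟩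
end

section
/- Let t be an SL₂-tiling with associated function p. If i < j < k are integers and m is a positive integer with p(i,j) = p(i,k) = m, then p(j,k) = m·(p(i−1,j) − p(i−1,k)); in particular p(i−1,j) > p(i−1,k). -/
/-- The infinite frieze `p` associated to an `SL₂`-tiling. -/
def pFrieze (t : ℤ → ℤ → ℤ) (a d : ℤ) : ℤ := t a 0 * t d 1 - t a 1 * t d 0

lemma pFrieze_pos (t : ℤ → ℤ → ℤ) (ht : IsSL2Tiling t) :
    ∀ j k : ℤ, j < k → 1 ≤ pFrieze t j k := by
  obtain ⟨hpos, hdet⟩ := ht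
  have key : ∀ n : ℕ, ∀ j : ℤ, 1 ≤ pFrieze t j (j + (n + 1)) := by
    intro n
    induction n with
    | zero =>
      intro j
      have h := hdet j 0
      unfold pFrieze
      norm_num at h ⊢
      linarith
    | succ n ih =>
      intro j
      have ecast : ((n + 1 : ℕ) : ℤ) + 1 = (n : ℤ) + 1 + 1 := by push_cast; ring
      rw [ecast]
      have hjk : 1 ≤ pFrieze t (j + 1) (j + (n + 1 + 1)) := by
        have := ih (j + 1)
        have e : (j + 1) + (n + 1 : ℤ) = j + (n + 1 + 1) := by ring
        rwa [e] at this
      have hid : t (j + (n + 1 + 1)) 0 =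
          pFrieze t j (j + (n + 1 + 1)) * t (j + 1) 0 -
          pFrieze t (j + 1) (j + (n + 1 + 1)) * t j 0 := by
        have h := hdet j 0
        unfold pFrieze
        norm_num at h ⊢
        linear_combination (-(t (j + ((n : ℤ) + 1 + 1)) 0)) * h
      nlinarith [hpos (j + 1) 0, hpos j 0, hpos (j + (n + 1 + 1)) 0]
  intro j k hjk
  have hn : k = j + ((k - j - 1).toNat + 1) := by
    have : ((k - j - 1).toNat : ℤ) = k - j - 1 := Int.toNat_of_nonneg (by omega)
    omega
  rw [hn]
  exact key _ j

theorem p_repeated_value (t : ℤ → ℤ → ℤ) (ht : IsSL2Tiling t)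
    (i j k m : ℤ) (hij : i < j) (hjk : j < k) (hm : 0 < m)
    (h1 : pFrieze t i j = m) (h2 : pFrieze t i k = m) :
    pFrieze t j k = m * (pFrieze t (i-1) j - pFrieze t (i-1) k) ∧
    pFrieze t (i-1) k < pFrieze t (i-1) j := by
  have hdet := ht.2 (i - 1) 0
  norm_num at hdet
  have heq : pFrieze t j k = m * (pFrieze t (i-1) j - pFrieze t (i-1) k) := by
    unfold pFrieze at *
    linear_combination (-(t j 0 * t k 1 - t j 1 * t k 0)) * hdet +
      (t (i-1) 0 * t j 1 - t (i-1) 1 * t j 0) * h2 -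
      (t (i-1) 0 * t k 1 - t (i-1) 1 * t k 0) * h1
  refine ⟨heq, ?_⟩
  have hp : 1 ≤ pFrieze t j k := pFrieze_pos t ht j k hjk
  nlinarith [heq]
end

section
/- Let t be an SL₂-tiling with associated functions p and q. Then: (a) there are no integers a < b < c < d with p(a,c) = 1 and p(b,d) = 1, and likewise none with q(a,c) = 1 and q(b,d) = 1; (b) there are no integers a < b < c and v with p(a,c) = 1 and t(b,v) = 1, and no integers u < v < w and b with q(u,w) = 1 and t(b,v) = 1; (c) there are no integers b < c and v < w with t(b,v) = 1 and t(c,w) = 1. (This expresses that the set of arcs Θ(t) determined by the entries equal to 1 of t, p and q is pairwise non-crossing, i.e. a partial triangulation.) -/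
/-- The infinite frieze `q` associated to an `SL₂`-tiling. -/
def qFrieze (t : ℤ → ℤ → ℤ) (u x : ℤ) : ℤ := t 0 u * t 1 x - t 0 x * t 1 u

/-!
All `2 × 2` minors `t(a,v) t(c,w) - t(a,w) t(c,v)` with `a < c`, `v < w` of an `SL₂`-tiling are
positive: the adjacent minors equal `1`, and positivity propagates along a chain of vectors with
positive first coordinates. The minor on rows `a, c` and two adjacent columns does not depend on
the columns, so it is `p(a,c)`; transposing the tiling exchanges `p` and `q`. Crossing arcs then
contradict the Plücker relations, whose right-hand sides are sums of two positive integers: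
`p(a,c) p(b,d) = p(a,b) p(c,d) + p(a,d) p(b,c)` and `t(b,v) p(a,c) = t(a,v) p(b,c) + t(c,v) p(a,b)`.
-/

theorem det_pos_of_forall_det_succ_pos {R : Type*} [CommRing R] [LinearOrder R]
    [IsStrictOrderedRing R] {x y : ℤ → R} (hx : ∀ n, 0 < x n)
    (hxy : ∀ n, 0 < x n * y (n + 1) - x (n + 1) * y n) {m n : ℤ} (hmn : m < n) :
    0 < x m * y n - x n * y m := by
  induction n, hmn using Int.leInduction with
  | base => exact hxy m
  | succ k _ ih =>
    have plucker : x k * (x m * y (k + 1) - x (k + 1) * y m)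
        = x m * (x k * y (k + 1) - x (k + 1) * y k) + x (k + 1) * (x m * y k - x k * y m) := by
      ring
    have := add_pos (mul_pos (hx m) (hxy k)) (mul_pos (hx (k + 1)) ih)
    exact pos_of_mul_pos_right (plucker ▸ this) (hx k).le

theorem mul_eq_mul_of_forall_succ {R : Type*} [CommRing R] [IsDomain R] {f g : ℤ → R}
    (hg : ∀ i, g i ≠ 0) (h : ∀ i, f i * g (i + 1) = f (i + 1) * g i) (a c : ℤ) :
    f a * g c = f c * g a := by
  induction c using Int.inductionOn' (b := a) with
  | zero => rfl
  | succ k _ ih =>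
    exact mul_right_cancel₀ (hg k) (by linear_combination g (k + 1) * ih + g a * h k)
  | pred k _ ih =>
    have hk := h (k - 1)
    rw [sub_add_cancel] at hk
    exact mul_right_cancel₀ (hg k) (by linear_combination g (k - 1) * ih - g a * hk)

def tilingMinor (t : ℤ → ℤ → ℤ) (a c v w : ℤ) : ℤ := t a v * t c w - t a w * t c v

theorem qFrieze_eq_pFrieze_transpose (t : ℤ → ℤ → ℤ) (u x : ℤ) :
    qFrieze t u x = pFrieze (fun i j => t j i) u x := by
  unfold qFrieze pFrieze
  ring

theorem pFrieze_mul_pFrieze (t : ℤ → ℤ → ℤ) (a b c d : ℤ) :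
    pFrieze t a c * pFrieze t b d =
      pFrieze t a b * pFrieze t c d + pFrieze t a d * pFrieze t b c := by
  unfold pFrieze
  ring

namespace IsSL2Tiling

variable {t : ℤ → ℤ → ℤ}

theorem pos (ht : IsSL2Tiling t) (i j : ℤ) : 0 < t i j := ht.1 i j

theorem tilingMinor_pos (ht : IsSL2Tiling t) {a c v w : ℤ} (hac : a < c) (hvw : v < w) :
    0 < tilingMinor t a c v w := by
  have adjacent_cols (j : ℤ) : 0 < tilingMinor t a c j (j + 1) := by
    have := det_pos_of_forall_det_succ_pos (y := fun i => t i (j + 1)) (ht.pos · j)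
      (fun i => by linarith [ht.2 i j]) hac
    unfold tilingMinor
    linarith
  exact det_pos_of_forall_det_succ_pos (y := t c) (ht.pos a) adjacent_cols hvw

theorem tilingMinor_succ (ht : IsSL2Tiling t) (a c v : ℤ) :
    tilingMinor t a c (v + 1) (v + 1 + 1) = tilingMinor t a c v (v + 1) := by
  -- the ratio `(t(i,v) + t(i,v+2)) / t(i,v+1)` does not depend on `i`
  have key := mul_eq_mul_of_forall_succ (f := fun i => t i v + t i (v + 1 + 1))
    (g := fun i => t i (v + 1)) (fun i => (ht.pos i (v + 1)).ne')
    (fun i => by linear_combination ht.2 i v - ht.2 i (v + 1)) a c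
  unfold tilingMinor
  linear_combination -key

theorem tilingMinor_eq_pFrieze (ht : IsSL2Tiling t) (a c v : ℤ) :
    tilingMinor t a c v (v + 1) = pFrieze t a c := by
  have hper : Function.Periodic (fun v => tilingMinor t a c v (v + 1)) 1 :=
    fun v => ht.tilingMinor_succ a c v
  simpa [tilingMinor, pFrieze] using hper.int_mul_eq v

theorem pFrieze_pos (ht : IsSL2Tiling t) {a c : ℤ} (hac : a < c) : 0 < pFrieze t a c := by
  rw [← ht.tilingMinor_eq_pFrieze a c 0]
  exact ht.tilingMinor_pos hac (lt_add_one 0)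

theorem mul_pFrieze (ht : IsSL2Tiling t) (a b c v : ℤ) :
    t b v * pFrieze t a c = t a v * pFrieze t b c + t c v * pFrieze t a b := by
  simp only [← ht.tilingMinor_eq_pFrieze _ _ v, tilingMinor]
  ring

theorem not_pFrieze_crossing (ht : IsSL2Tiling t) {a b c d : ℤ} (hab : a < b) (hbc : b < c)
    (hcd : c < d) : ¬ (pFrieze t a c = 1 ∧ pFrieze t b d = 1) := by
  rintro ⟨hac, hbd⟩
  have := pFrieze_mul_pFrieze t a b c d
  nlinarith [ht.pFrieze_pos hab, ht.pFrieze_pos hcd, ht.pFrieze_pos (hab.trans (hbc.trans hcd)),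
    ht.pFrieze_pos hbc]

theorem not_pFrieze_crossing_entry (ht : IsSL2Tiling t) {a b c : ℤ} (v : ℤ) (hab : a < b)
    (hbc : b < c) : ¬ (pFrieze t a c = 1 ∧ t b v = 1) := by
  rintro ⟨hac, hb⟩
  have := ht.mul_pFrieze a b c v
  nlinarith [ht.pFrieze_pos hab, ht.pFrieze_pos hbc, ht.pos a v, ht.pos c v]

theorem not_entry_crossing (ht : IsSL2Tiling t) {b c v w : ℤ} (hbc : b < c) (hvw : v < w) :
    ¬ (t b v = 1 ∧ t c w = 1) := by
  rintro ⟨hbv, hcw⟩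
  have := ht.tilingMinor_pos hbc hvw
  unfold tilingMinor at this
  nlinarith [ht.pos b w, ht.pos c v]

end IsSL2Tiling

theorem theta_non_crossing (t : ℤ → ℤ → ℤ) (ht : IsSL2Tiling t) :
    -- (a) two crossing internal arcs in interval I or in interval III
    (∀ a b c d : ℤ, a < b → b < c → c < d →
      ¬ (pFrieze t a c = 1 ∧ pFrieze t b d = 1)) ∧
    (∀ a b c d : ℤ, a < b → b < c → c < d →
      ¬ (qFrieze t a c = 1 ∧ qFrieze t b d = 1)) ∧
    -- (b) an internal arc crossing a connecting arc
    (∀ a b c v : ℤ, a < b → b < c →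
      ¬ (pFrieze t a c = 1 ∧ t b v = 1)) ∧
    (∀ u v w b : ℤ, u < v → v < w →
      ¬ (qFrieze t u w = 1 ∧ t b v = 1)) ∧
    -- (c) two crossing connecting arcs
    (∀ b c v w : ℤ, b < c → v < w →
      ¬ (t b v = 1 ∧ t c w = 1)) := by
  simp only [qFrieze_eq_pFrieze_transpose]
  exact ⟨fun _ _ _ _ => ht.not_pFrieze_crossing,
    fun _ _ _ _ => ht.transpose.not_pFrieze_crossing,
    fun _ _ _ v => ht.not_pFrieze_crossing_entry v,
    fun _ _ _ b => ht.transpose.not_pFrieze_crossing_entry b,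
    fun _ _ _ _ => ht.not_entry_crossing⟩
end

section
/- Let t be an SL₂-tiling with no entry equal to 1, i.e. t(i,j) ≥ 2 for all i, j, and let m be the minimal value attained by t. Then m occurs at most once in each row and at most once in each column of t: if t(b,v) = t(b,v') = m then v = v', and if t(b,v) = t(b',v) = m then b = b'. -/
theorem Int.le_of_two_mul_le_add {f : ℤ → ℤ} {v w : ℤ} (hvw : v < w)
    (hstart : f v ≤ f (v + 1))
    (hconv : ∀ j, v < j → j < w → 2 * f j ≤ f (j - 1) + f (j + 1)) :
    f (v + 1) ≤ f w := by
  suffices h : ∀ j (hj : v + 1 ≤ j), j ≤ w → f (v + 1) ≤ f j ∧ f (j - 1) ≤ f j from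
    (h w (by omega) le_rfl).1
  intro j hj
  induction j, hj using Int.leInduction with
  | base => exact fun _ => by simpa using hstart
  | succ j hj ih =>
    intro hjw
    obtain ⟨hfirst, hprev⟩ := ih (by omega)
    have := hconv j (by omega) (by omega)
    rw [add_sub_cancel_right]
    constructor <;> linarith

def deleteColumn (t : ℤ → ℤ → ℤ) (j : ℤ) : ℤ → ℤ → ℤ :=
  fun i l => if l < j then t i l else t i (l + 1)

theorem exists_deleteColumn_eq (t : ℤ → ℤ → ℤ) (j i l : ℤ) :
    ∃ l', deleteColumn t j i l = t i l' := by
  unfold deleteColumn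
  split_ifs
  exacts [⟨l, rfl⟩, ⟨l + 1, rfl⟩]

namespace IsSL2Tiling

variable {t : ℤ → ℤ → ℤ}

theorem eq_one_of_eq_right (ht : IsSL2Tiling t) {i j : ℤ} (h : t i j = t i (j + 1)) :
    t i j = 1 := by
  have hdvd : t i j ∣ 1 := ⟨t (i + 1) (j + 1) - t (i + 1) j, by
    linear_combination -(ht.2 i j) + t (i + 1) j * h⟩
  have := Int.le_of_dvd one_pos hdvd
  linarith [ht.1 i j]

theorem exists_column_recurrence (ht : IsSL2Tiling t) (j : ℤ) :
    ∃ a : ℤ, ∀ i, t i (j - 1) + t i (j + 1) = a * t i j := by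
  -- the minor of columns `j - 1` and `j + 1` in rows `i, i + 1` is the coefficient
  set a : ℤ → ℤ := fun i => t i (j - 1) * t (i + 1) (j + 1) - t i (j + 1) * t (i + 1) (j - 1)
  have hleft := fun i => ht.2 i (j - 1)
  simp only [sub_add_cancel] at hleft
  have hrow : ∀ i, t i (j - 1) + t i (j + 1) = a i * t i j := fun i => by
    linear_combination -(t i (j - 1) * ht.2 i j) - t i (j + 1) * hleft i
  have hnext : ∀ i, t (i + 1) (j - 1) + t (i + 1) (j + 1) = a i * t (i + 1) j := fun i => by
    linear_combination -(t (i + 1) (j - 1) * ht.2 i j) - t (i + 1) (j + 1) * hleft i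
  have hperiodic : Function.Periodic a 1 := fun i =>
    mul_right_cancel₀ (by linarith [ht.1 (i + 1) j] : t (i + 1) j ≠ 0)
      ((hrow (i + 1)).symm.trans (hnext i))
  have hconst : ∀ i, a i = a 0 := fun i => by simpa using hperiodic.int_mul_eq i
  exact ⟨a 0, fun i => hconst i ▸ hrow i⟩

theorem two_mul_le_add (ht : IsSL2Tiling t) {j : ℤ}
    (hj : ¬ ∀ i, t i (j - 1) + t i (j + 1) = t i j) (b : ℤ) :
    2 * t b j ≤ t b (j - 1) + t b (j + 1) := by
  obtain ⟨a, ha⟩ := ht.exists_column_recurrence j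
  have ha1 : a ≠ 1 := by
    rintro rfl
    exact hj fun i => by rw [ha i, one_mul]
  have hpos : 0 < a * t b j := by rw [← ha b]; linarith [ht.1 b (j - 1), ht.1 b (j + 1)]
  have ha2 : 2 ≤ a := by
    have := pos_of_mul_pos_left hpos (by linarith [ht.1 b j])
    omega
  rw [ha b]
  exact mul_le_mul_of_nonneg_right ha2 (by linarith [ht.1 b j])

theorem deleteColumn (ht : IsSL2Tiling t) {j : ℤ}
    (hj : ∀ i, t i (j - 1) + t i (j + 1) = t i j) : IsSL2Tiling (deleteColumn t j) := by
  refine ⟨fun i l => ?_, fun i l => ?_⟩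
  · obtain ⟨l', hl'⟩ := exists_deleteColumn_eq t j i l
    exact hl' ▸ ht.1 i l'
  unfold _root_.deleteColumn
  rcases lt_trichotomy l (j - 1) with h | rfl | h
  · simp only [if_pos (show l < j by omega), if_pos (show l + 1 < j by omega)]
    exact ht.2 i l
  · simp only [sub_add_cancel, lt_irrefl, if_false, if_pos (show j - 1 < j by omega)]
    linear_combination ht.2 i j + t (i + 1) (j + 1) * hj i - t i (j + 1) * hj (i + 1)
  · simp only [if_neg (show ¬ l < j by omega), if_neg (show ¬ l + 1 < j by omega)]
    exact ht.2 i (l + 1)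

theorem le_of_eq_min_of_eq_min {m : ℤ} (hm : 1 < m) (ht : IsSL2Tiling t)
    (hmin : ∀ i j, m ≤ t i j) {b v w : ℤ} (hv : t b v = m) (hw : t b w = m) : w ≤ v := by
  obtain ⟨n, hn⟩ : ∃ n : ℕ, w ≤ v + n := ⟨(w - v).toNat, by omega⟩
  induction n generalizing t w with
  | zero => simpa using hn
  | succ n ih =>
    by_contra hvw
    by_cases hdel : ∃ j, v < j ∧ j < w ∧ ∀ i, t i (j - 1) + t i (j + 1) = t i j
    · obtain ⟨j, hvj, hjw, hj⟩ := hdel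
      have hmin' : ∀ i l, m ≤ _root_.deleteColumn t j i l := fun i l => by
        obtain ⟨l', hl'⟩ := exists_deleteColumn_eq t j i l
        exact hl' ▸ hmin i l'
      have := ih (ht.deleteColumn hj) hmin' (w := w - 1)
        (by simp [_root_.deleteColumn, hvj, hv])
        (by simp [_root_.deleteColumn, show ¬ w - 1 < j by omega, hw]) (by omega)
      omega
    · push Not at hdel
      have hnext : t b (v + 1) ≤ t b w :=
        Int.le_of_two_mul_le_add (by omega) (hv ▸ hmin b (v + 1))
          fun j hvj hjw => ht.two_mul_le_add (not_forall.2 (hdel j hvj hjw)) b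
      have := ht.eq_one_of_eq_right (hv.trans (le_antisymm (hmin b (v + 1)) (hw ▸ hnext)))
      omega

theorem eq_of_eq_min_of_eq_min {m : ℤ} (hm : 1 < m) (ht : IsSL2Tiling t)
    (hmin : ∀ i j, m ≤ t i j) {b v w : ℤ} (hv : t b v = m) (hw : t b w = m) : v = w :=
  le_antisymm (ht.le_of_eq_min_of_eq_min hm hmin hw hv) (ht.le_of_eq_min_of_eq_min hm hmin hv hw)

end IsSL2Tiling

theorem minimum_once_per_row_and_column_general (t : ℤ → ℤ → ℤ) (ht : IsSL2Tiling t)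
    (h2 : ∀ i j : ℤ, 2 ≤ t i j)
    (m : ℤ) (hmin : ∀ i j : ℤ, m ≤ t i j) :
    (∀ b v v' : ℤ, t b v = m → t b v' = m → v = v') ∧
    (∀ b b' v : ℤ, t b v = m → t b' v = m → b = b') := by
  refine ⟨fun b v v' hv hv' => ?_, fun b b' v hb hb' => ?_⟩
  · exact ht.eq_of_eq_min_of_eq_min (hv ▸ h2 b v) hmin hv hv'
  · exact ht.transpose.eq_of_eq_min_of_eq_min (hb ▸ h2 b v) (fun i j => hmin j i) hb hb'

theorem minimum_once_per_row_and_column (t : ℤ → ℤ → ℤ) (ht : IsSL2Tiling t)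
    (h2 : ∀ i j : ℤ, 2 ≤ t i j)
    (m : ℤ) (hmin : ∀ i j : ℤ, m ≤ t i j) (hatt : ∃ i j : ℤ, t i j = m) :
    (∀ b v v' : ℤ, t b v = m → t b v' = m → v = v') ∧
    (∀ b b' v : ℤ, t b v = m → t b' v = m → b = b') :=
  minimum_once_per_row_and_column_general t ht h2 m hmin
end
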